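/- arXiv:1203.3186 — 3 statements merged into one kernel-verified Lean document; each statement's English description precedes it below -/
import Mathlib

section
/- Let (A, φ) and (A⁽ᵏ⁾, φ⁽ᵏ⁾) be C*-probability spaces adapted to families X = {X_m} and X⁽ᵏ⁾ = {X_m⁽ᵏ⁾} respectively (so the GNS representations of φ and φ⁽ᵏ⁾ are isometric on the dense *-algebra of polynomials). If X⁽ᵏ⁾ converges to X in moments — i.e. φ⁽ᵏ⁾(P(X⁽ᵏ⁾)) → φ(P(X)) for every *-polynomial P — then for every *-polynomial P and every nonprincipal ultrafilter 𝒰, ‖P(X)‖ ≤ lim_𝒰 ‖P(X⁽ᵏ⁾)‖. -/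
/-!
For a state `ψ` on a C⋆-algebra, `ψ((a⋆a)ⁿ) ≤ ‖a‖²ⁿ`; if `ψ` is faithful the converse growth
holds as well: applying `ψ` to `sⁿ y² ≤ (a⋆a)ⁿ`, where `y` is a continuous bump near the top
`‖a‖²` of the spectrum of `a⋆a` and `s < ‖a‖²`, gives `ψ((a⋆a)ⁿ) ≥ c sⁿ` with
`c = ψ(y²) > 0`. Hence `‖a‖` is determined by the moments of `a⋆a` under a faithful state.
With `a = P(X)`, these moments are values of `φ` on the *-polynomials `(P*P)ⁿ`, so they are
limits of the moments of `P(X⁽ᵏ⁾)`, which are bounded by `‖P(X⁽ᵏ⁾)‖²ⁿ`.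
-/

open Filter Topology

noncomputable abbrev starEval {M B : Type*} [Semiring B] [Algebra ℂ B] [Star B] (x : M → B) :
    FreeAlgebra ℂ (M ⊕ M) →ₐ[ℂ] B :=
  FreeAlgebra.lift ℂ (Sum.elim x fun m => star (x m))

lemma StarAlgHom.map_starEval {M B C : Type*} [Semiring B] [Algebra ℂ B] [Star B] [Semiring C]
    [Algebra ℂ C] [Star C] (f : B →⋆ₐ[ℂ] C) (x : M → B) (P : FreeAlgebra ℂ (M ⊕ M)) :
    f (starEval x P) = starEval (f ∘ x) P := by
  change (f.toAlgHom.comp (starEval x)) P = _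
  congr 1
  ext (m | m) <;> simp [map_star]

lemma exists_starEval_eq_star {M B : Type*} [Semiring B] [Algebra ℂ B] [StarRing B]
    [StarModule ℂ B] (x : M → B) (P : FreeAlgebra ℂ (M ⊕ M)) :
    ∃ Q, starEval x Q = star (starEval x P) := by
  induction P using FreeAlgebra.induction with
  | grade0 z =>
    exact ⟨algebraMap ℂ _ (star z), by simp only [AlgHom.commutes, algebraMap_star_comm]⟩
  | grade1 s =>
    rcases s with m | m
    · exact ⟨FreeAlgebra.ι ℂ (Sum.inr m), by simp⟩
    · exact ⟨FreeAlgebra.ι ℂ (Sum.inl m), by simp⟩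
  | mul P R hP hR =>
    obtain ⟨P', hP'⟩ := hP
    obtain ⟨R', hR'⟩ := hR
    exact ⟨R' * P', by rw [map_mul, map_mul, hP', hR', star_mul]⟩
  | add P R hP hR =>
    obtain ⟨P', hP'⟩ := hP
    obtain ⟨R', hR'⟩ := hR
    exact ⟨P' + R', by rw [map_add, map_add, hP', hR', star_add]⟩

lemma exists_starEval_eq_star_pi {M A ι : Type*} {B : ι → Type*} [Semiring A] [Algebra ℂ A]
    [StarRing A] [StarModule ℂ A] [∀ i, Semiring (B i)] [∀ i, Algebra ℂ (B i)]
    [∀ i, StarRing (B i)] [∀ i, StarModule ℂ (B i)] (x : M → A) (y : ∀ i, M → B i)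
    (P : FreeAlgebra ℂ (M ⊕ M)) :
    ∃ Q, starEval x Q = star (starEval x P) ∧ ∀ i, starEval (y i) Q = star (starEval (y i) P) := by
  -- one `Q` serves all the evaluations since it is found in the product `A × Π i, B i`
  obtain ⟨Q, hQ⟩ := exists_starEval_eq_star (fun m => (x m, fun i => y i m)) P
  refine ⟨Q, ?_, fun i => ?_⟩
  · have := congrArg (StarAlgHom.fst ℂ A (∀ i, B i)) hQ
    rwa [map_star, StarAlgHom.map_starEval, StarAlgHom.map_starEval] at this
  · have := congrArg ((Pi.evalStarAlgHom ℂ B i).comp (StarAlgHom.snd ℂ A (∀ i, B i))) hQ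
    rwa [map_star, StarAlgHom.map_starEval, StarAlgHom.map_starEval] at this

section Order

variable {B : Type*} [CStarAlgebra B] [PartialOrder B] [StarOrderedRing B]

lemma re_apply_mono {ψ : B →ₗ[ℂ] ℂ} (hpos : ∀ b, 0 ≤ (ψ (star b * b)).re) {x y : B}
    (hxy : x ≤ y) : (ψ x).re ≤ (ψ y).re := by
  have hyx : 0 ≤ y - x := sub_nonneg.mpr hxy
  have := hpos (CFC.sqrt (y - x))
  rwa [(CFC.sqrt_nonneg _).isSelfAdjoint.star_eq, CFC.sqrt_mul_sqrt_self _ hyx, map_sub,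
    Complex.sub_re, sub_nonneg] at this

lemma exists_ne_zero_smul_mul_self_le_pow {b : B} (hb : 0 ≤ b) {s : ℝ} (hs : 0 ≤ s)
    (hsb : s < ‖b‖) : ∃ y, y ≠ 0 ∧ IsSelfAdjoint y ∧ ∀ n : ℕ, s ^ n • (y * y) ≤ b ^ n := by
  have : Nontrivial B := ⟨⟨b, 0, fun h => by simp [h] at hsb; linarith⟩⟩
  set r := ‖b‖
  -- a continuous bump, equal to `1` at `r ∈ spectrum ℝ b` and vanishing on `(-∞, s]`
  set g : ℝ → ℝ := fun t => min 1 (max 0 ((t - s) / (r - s)))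
  have hg : Continuous g := by fun_prop
  have hgr : g r = 1 := by simp [g, div_self (sub_pos.mpr hsb).ne']
  refine ⟨cfc g b, fun h0 => ?_, cfc_predicate g b, fun n => ?_⟩
  · have h1 : (1 : ℝ) ∈ spectrum ℝ (cfc g b) := by
      rw [cfc_map_spectrum g b]
      exact ⟨r, CStarAlgebra.norm_mem_spectrum_of_nonneg hb, hgr⟩
    simp [h0] at h1
  · have hpt : ∀ t ∈ spectrum ℝ b, s ^ n * (g t * g t) ≤ t ^ n := by
      intro t ht
      have ht0 : 0 ≤ t := spectrum_nonneg_of_nonneg hb ht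
      rcases le_or_gt t s with hts | hst
      · have : g t = 0 := by
          simp only [g]
          rw [max_eq_left (div_nonpos_of_nonpos_of_nonneg (sub_nonpos.mpr hts)
            (sub_pos.mpr hsb).le), min_eq_right zero_le_one]
        simp [this, pow_nonneg ht0]
      · have hg1 : g t * g t ≤ 1 :=
          mul_le_one₀ (min_le_left _ _) (le_min zero_le_one (le_max_left _ _)) (min_le_left _ _)
        calc s ^ n * (g t * g t) ≤ s ^ n := mul_le_of_le_one_right (pow_nonneg hs n) hg1
          _ ≤ t ^ n := pow_le_pow_left₀ hs hst.le n
    have := cfc_mono hpt (by fun_prop : Continuous fun t => s ^ n * (g t * g t)).continuousOn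
      (continuous_pow n).continuousOn
    rwa [cfc_const_mul _ (fun t => g t * g t) b (hg.mul hg).continuousOn,
      cfc_mul g g b hg.continuousOn hg.continuousOn, cfc_pow_id b n] at this

end Order

section Functional

variable {B : Type*} [CStarAlgebra B]

lemma re_apply_pow_star_mul_self_le {ψ : B →ₗ[ℂ] ℂ} (hψ1 : ψ 1 = 1)
    (hpos : ∀ b, 0 ≤ (ψ (star b * b)).re) (a : B) (n : ℕ) :
    (ψ ((star a * a) ^ n)).re ≤ ‖a‖ ^ (2 * n) := by
  let _ := CStarAlgebra.spectralOrder B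
  have := CStarAlgebra.spectralOrderedRing B
  rcases Nat.eq_zero_or_pos n with rfl | hn
  · simp [hψ1]
  have hle := re_apply_mono hpos ((IsSelfAdjoint.star_mul_self a).pow n).le_algebraMap_norm_self
  rw [Algebra.algebraMap_eq_smul_one, ψ.map_smul_of_tower, hψ1] at hle
  calc (ψ ((star a * a) ^ n)).re ≤ ‖(star a * a) ^ n‖ := by simpa using hle
    _ ≤ ‖star a * a‖ ^ n := norm_pow_le' _ hn
    _ = ‖a‖ ^ (2 * n) := by rw [CStarRing.norm_star_mul_self, pow_mul, sq]

lemma norm_le_of_re_apply_pow_star_mul_self_le {ψ : B →ₗ[ℂ] ℂ}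
    (hpos : ∀ b, 0 ≤ (ψ (star b * b)).re) (hfaith : ∀ b, b ≠ 0 → 0 < (ψ (star b * b)).re)
    {a : B} {C : ℝ} (hC : 0 ≤ C) (hmom : ∀ n : ℕ, (ψ ((star a * a) ^ n)).re ≤ C ^ (2 * n)) :
    ‖a‖ ≤ C := by
  let _ := CStarAlgebra.spectralOrder B
  have := CStarAlgebra.spectralOrderedRing B
  by_contra! hCa
  have hb : 0 ≤ star a * a := star_mul_self_nonneg a
  obtain ⟨s, hCs, hsa⟩ : ∃ s, C ^ 2 < s ∧ s < ‖star a * a‖ := by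
    refine exists_between ?_
    rw [CStarRing.norm_star_mul_self, ← sq]
    gcongr
  have hs : 0 < s := (sq_nonneg C).trans_lt hCs
  obtain ⟨y, hy0, hysa, hy⟩ := exists_ne_zero_smul_mul_self_le_pow hb hs.le hsa
  have hc := hfaith y hy0
  rw [hysa.star_eq] at hc
  have hratio : ∀ n : ℕ, (ψ (y * y)).re ≤ (C ^ 2 / s) ^ n := fun n => by
    have := (re_apply_mono hpos (hy n)).trans (hmom n)
    rw [ψ.map_smul_of_tower, Complex.real_smul, Complex.re_ofReal_mul, pow_mul] at this
    rw [div_pow, le_div_iff₀ (pow_pos hs n)]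
    linarith
  have hlim := tendsto_pow_atTop_nhds_zero_of_lt_one (by positivity) ((div_lt_one hs).mpr hCs)
  linarith [ge_of_tendsto hlim (.of_forall hratio)]

end Functional

abbrev CStarAlgebra.ofCStarRing (B : Type*) [NormedRing B] [StarRing B] [CStarRing B]
    [CompleteSpace B] [NormedAlgebra ℂ B] [StarModule ℂ B] : CStarAlgebra B :=
  { ‹NormedRing B›, ‹StarRing B›, ‹CStarRing B›, ‹CompleteSpace B›, ‹NormedAlgebra ℂ B›,
    ‹StarModule ℂ B› with }

theorem stmt_15_general {M : Type*}
    (A : Type*) [NormedRing A] [StarRing A] [CStarRing A] [CompleteSpace A]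
    [NormedAlgebra ℂ A] [StarModule ℂ A]
    (Ak : ℕ → Type*) [∀ k, NormedRing (Ak k)] [∀ k, StarRing (Ak k)]
    [∀ k, CStarRing (Ak k)] [∀ k, CompleteSpace (Ak k)]
    [∀ k, NormedAlgebra ℂ (Ak k)] [∀ k, StarModule ℂ (Ak k)]
    (X : M → A) (Xk : ∀ k, M → Ak k)
    (φ : A →ₗ[ℂ] ℂ) (φk : ∀ k, Ak k →ₗ[ℂ] ℂ)
    (hφk1 : ∀ k, φk k 1 = 1)
    (hφpos : ∀ a : A, 0 ≤ (φ (star a * a)).re ∧ (φ (star a * a)).im = 0)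
    (hφkpos : ∀ k, ∀ a : Ak k, 0 ≤ (φk k (star a * a)).re ∧ (φk k (star a * a)).im = 0)
    (hfaith : ∀ a : A, φ (star a * a) = 0 → a = 0)
    (hmom : ∀ P : FreeAlgebra ℂ (M ⊕ M),
      Tendsto (fun k => φk k (FreeAlgebra.lift ℂ (Sum.elim (Xk k) fun m => star (Xk k m)) P))
        atTop (𝓝 (φ (FreeAlgebra.lift ℂ (Sum.elim X fun m => star (X m)) P)))) :
    ∀ P : FreeAlgebra ℂ (M ⊕ M), ∀ 𝒰 : Ultrafilter ℕ, (∀ k : ℕ, 𝒰 ≠ pure k) →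
      ∀ L : ℝ,
        Tendsto (fun k => ‖FreeAlgebra.lift ℂ (Sum.elim (Xk k) fun m => star (Xk k m)) P‖)
          (𝒰 : Filter ℕ) (𝓝 L) →
        ‖FreeAlgebra.lift ℂ (Sum.elim X fun m => star (X m)) P‖ ≤ L := by
  intro P 𝒰 h𝒰 L hL
  let _ := CStarAlgebra.ofCStarRing A
  let _ := fun k => CStarAlgebra.ofCStarRing (Ak k)
  have h𝒰_le : (𝒰 : Filter ℕ) ≤ atTop := Nat.cofinite_eq_atTop ▸
    𝒰.le_cofinite_or_eq_pure.resolve_right fun ⟨k, hk⟩ => h𝒰 k hk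
  have hL0 : 0 ≤ L := ge_of_tendsto hL (.of_forall fun k => norm_nonneg _)
  obtain ⟨Q, hQ, hQk⟩ := exists_starEval_eq_star_pi X Xk P
  refine norm_le_of_re_apply_pow_star_mul_self_le (fun a => (hφpos a).1) (fun a ha => ?_) hL0
    fun n => ?_
  · obtain ⟨hre, him⟩ := hφpos a
    exact hre.lt_of_ne fun h0 => ha (hfaith a (Complex.ext h0.symm him))
  · have hconv := ((Complex.continuous_re.tendsto _).comp (hmom ((Q * P) ^ n))).mono_left h𝒰_le
    simp only [Function.comp_def, map_pow, map_mul, hQ, hQk] at hconv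
    refine le_of_tendsto_of_tendsto' hconv (hL.pow (2 * n)) fun k => ?_
    exact re_apply_pow_star_mul_self_le (hφk1 k) (fun a => (hφkpos k a).1) _ n

/-- if C*-probability spaces `(A⁽ᵏ⁾, φ⁽ᵏ⁾)` are adapted to the families
`X⁽ᵏ⁾` (faithful states, dense *-polynomial algebra) and `X⁽ᵏ⁾ → X` in moments, then
for every *-polynomial `P` (an element of the free *-algebra on the index set `M`,
evaluated by sending the two copies of `M` to the variables and their adjoints) and
every nonprincipal ultrafilter `𝒰`, `‖P(X)‖ ≤ lim_𝒰 ‖P(X⁽ᵏ⁾)‖`. -/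
theorem stmt_15 {M : Type*}
    (A : Type*) [NormedRing A] [StarRing A] [CStarRing A] [CompleteSpace A]
    [NormedAlgebra ℂ A] [StarModule ℂ A]
    (Ak : ℕ → Type*) [∀ k, NormedRing (Ak k)] [∀ k, StarRing (Ak k)]
    [∀ k, CStarRing (Ak k)] [∀ k, CompleteSpace (Ak k)]
    [∀ k, NormedAlgebra ℂ (Ak k)] [∀ k, StarModule ℂ (Ak k)]
    (X : M → A) (Xk : ∀ k, M → Ak k)
    (φ : A →ₗ[ℂ] ℂ) (φk : ∀ k, Ak k →ₗ[ℂ] ℂ)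
    (hφ1 : φ 1 = 1) (hφk1 : ∀ k, φk k 1 = 1)
    (hφpos : ∀ a : A, 0 ≤ (φ (star a * a)).re ∧ (φ (star a * a)).im = 0)
    (hφkpos : ∀ k, ∀ a : Ak k, 0 ≤ (φk k (star a * a)).re ∧ (φk k (star a * a)).im = 0)
    (hfaith : ∀ a : A, φ (star a * a) = 0 → a = 0)
    (hkfaith : ∀ k, ∀ a : Ak k, φk k (star a * a) = 0 → a = 0)
    (hdense : Dense (Set.range
      (FreeAlgebra.lift ℂ (Sum.elim X fun m => star (X m)) : FreeAlgebra ℂ (M ⊕ M) → A)))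
    (hkdense : ∀ k, Dense (Set.range
      (FreeAlgebra.lift ℂ (Sum.elim (Xk k) fun m => star (Xk k m)) :
        FreeAlgebra ℂ (M ⊕ M) → Ak k)))
    (hmom : ∀ P : FreeAlgebra ℂ (M ⊕ M),
      Tendsto (fun k => φk k (FreeAlgebra.lift ℂ (Sum.elim (Xk k) fun m => star (Xk k m)) P))
        atTop (𝓝 (φ (FreeAlgebra.lift ℂ (Sum.elim X fun m => star (X m)) P)))) :
    ∀ P : FreeAlgebra ℂ (M ⊕ M), ∀ 𝒰 : Ultrafilter ℕ, (∀ k : ℕ, 𝒰 ≠ pure k) →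
      ∀ L : ℝ,
        Tendsto (fun k => ‖FreeAlgebra.lift ℂ (Sum.elim (Xk k) fun m => star (Xk k m)) P‖)
          (𝒰 : Filter ℕ) (𝓝 L) →
        ‖FreeAlgebra.lift ℂ (Sum.elim X fun m => star (X m)) P‖ ≤ L :=
  stmt_15_general A Ak X Xk φ φk hφk1 hφpos hφkpos hfaith hmom
end

section
/- Let T and (Tₖ) be bounded normal operators on Hilbert spaces, with spectra K = σ(T) ⊂ ℂ and Kₖ = σ(Tₖ) ⊂ ℂ. Assume Tₖ converges in *-moments to T with respect to faithful states (equivalently, the spectral measures converge weakly and have full support K, Kₖ). Then Tₖ → T strongly (i.e. ‖P(Tₖ, Tₖ*)‖ → ‖P(T, T*)‖ for all *-polynomials P) if and only if sup_{λ ∈ Kₖ} dist(λ, K) → 0 as k → ∞. -/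
open Filter Topology MeasureTheory
open scoped BoundedContinuousFunction

/-!
By the continuous functional calculus, `‖P(T, T*)‖` is the supremum of `|P(z, z̄)|` over `σ(T)`,
and by Stone–Weierstrass the functions `z ↦ P(z, z̄)` are uniformly dense in the continuous
functions on any compact subset of `ℂ`.

If these suprema converge for every `P`, then `P = z` confines all `σ(Tₖ)` to a fixed disc, and
density extends the convergence to the continuous function `z ↦ dist(z, K)`, whose supremum over
`K` is `0`.

Conversely, if `σ(Tₖ)` eventually lies in every neighbourhood of `K`, then the supremum over
`σ(Tₖ)` of a continuous function is eventually at most slightly above its supremum over `K`.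
For the lower bound, convergence of moments together with density gives weak convergence
`μₖ → μ`, so by the portmanteau theorem every ball around a point of `K = supp μ` eventually has
positive `μₖ`-measure and hence meets `σ(Tₖ) = supp μₖ`.
-/

noncomputable def starPolyFun : FreeAlgebra ℂ Bool →ₐ[ℂ] C(ℂ, ℂ) :=
  FreeAlgebra.lift ℂ fun b => if b then ContinuousMap.id ℂ else star (ContinuousMap.id ℂ)

lemma lift_apply_eq_starPolyFun (P : FreeAlgebra ℂ Bool) (z : ℂ) :
    FreeAlgebra.lift ℂ (fun b : Bool => if b then z else (starRingEnd ℂ) z) P =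
      starPolyFun P z := by
  change _ = ContinuousMap.evalAlgHom ℂ ℂ z (starPolyFun P)
  rw [← AlgHom.comp_apply]
  congr 1
  refine FreeAlgebra.hom_ext (funext fun b => ?_)
  cases b <;> simp [starPolyFun]

lemma exists_starPolyFun_dist_lt {s : Set ℂ} (hs : IsCompact s) {f : ℂ → ℂ}
    (hf : ContinuousOn f s) {ε : ℝ} (hε : 0 < ε) :
    ∃ P, ∀ z ∈ s, dist (f z) (starPolyFun P z) < ε := by
  have := isCompact_iff_compactSpace.mp hs
  let A : Subalgebra ℂ C(s, ℂ) :=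
    ((ContinuousMap.compStarAlgHom' ℂ ℂ (.restrict s (.id ℂ))).toAlgHom.comp starPolyFun).range
  have hdense (g : C(s, ℂ)) : g ∈ A.topologicalClosure := by
    induction g using ContinuousMap.induction_on_of_compact with
    | const r => exact A.topologicalClosure.algebraMap_mem r
    | id => exact A.le_topologicalClosure ⟨FreeAlgebra.ι ℂ true, by ext; simp [starPolyFun]⟩
    | star_id => exact A.le_topologicalClosure ⟨FreeAlgebra.ι ℂ false, by ext; simp [starPolyFun]⟩
    | add f g hf hg => exact add_mem hf hg
    | mul f g hf hg => exact mul_mem hf hg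
    | frequently f hf =>
      exact A.isClosed_topologicalClosure.closure_subset (mem_closure_iff_frequently.2 hf)
  have hf' := hdense ⟨s.domRestrict f, hf.domRestrict⟩
  rw [← SetLike.mem_coe, Subalgebra.topologicalClosure_coe] at hf'
  obtain ⟨_, ⟨P, rfl⟩, hP⟩ := Metric.mem_closure_iff.1 hf' ε hε
  exact ⟨P, fun z hz => (ContinuousMap.dist_apply_le_dist ⟨z, hz⟩).trans_lt hP⟩

lemma lift_eq_cfc_starPolyFun {A : Type*} [CStarAlgebra A] (a : A) [IsStarNormal a]
    (P : FreeAlgebra ℂ Bool) :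
    FreeAlgebra.lift ℂ (fun b : Bool => if b then a else star a) P = cfc (starPolyFun P) a := by
  induction P using FreeAlgebra.induction with
  | grade0 r => simp only [AlgHom.commutes]; exact (cfc_const r a).symm
  | grade1 b =>
    cases b
    · simp only [starPolyFun, FreeAlgebra.lift_ι_apply, Bool.false_eq_true, if_false]
      exact (cfc_star_id a).symm
    · simpa [starPolyFun] using (cfc_id ℂ a).symm
  | mul P Q hP hQ =>
    rw [map_mul, map_mul, hP, hQ]
    exact (cfc_mul _ _ a (starPolyFun P).continuous.continuousOn
      (starPolyFun Q).continuous.continuousOn).symm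
  | add P Q hP hQ =>
    rw [map_add, map_add, hP, hQ]
    exact (cfc_add a _ _ (starPolyFun P).continuous.continuousOn
      (starPolyFun Q).continuous.continuousOn).symm

/-- `sSup` makes this `0` when `s` is empty or `‖f‖` is unbounded on `s`. -/
noncomputable def supNormOn {X E : Type*} [NormedAddCommGroup E] (s : Set X) (f : X → E) : ℝ :=
  sSup ((fun z => ‖f z‖) '' s)

section supNormOn

variable {X E : Type*} [NormedAddCommGroup E] {s : Set X} {f g : X → E}

lemma supNormOn_nonneg : 0 ≤ supNormOn s f :=
  Real.sSup_nonneg (by rintro _ ⟨z, -, rfl⟩; exact norm_nonneg _)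

lemma norm_le_supNormOn [TopologicalSpace X] (hs : IsCompact s) (hf : ContinuousOn f s) {z : X}
    (hz : z ∈ s) : ‖f z‖ ≤ supNormOn s f :=
  le_csSup (hs.bddAbove_image hf.norm) (Set.mem_image_of_mem _ hz)

lemma supNormOn_le {C : ℝ} (h : ∀ z ∈ s, ‖f z‖ ≤ C) (hC : 0 ≤ C) : supNormOn s f ≤ C :=
  Real.sSup_le (by rintro _ ⟨z, hz, rfl⟩; exact h z hz) hC

lemma supNormOn_le_add [TopologicalSpace X] (hs : IsCompact s) (hg : ContinuousOn g s) {ε : ℝ}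
    (hε : 0 ≤ ε) (h : ∀ z ∈ s, dist (f z) (g z) ≤ ε) : supNormOn s f ≤ supNormOn s g + ε := by
  refine supNormOn_le (fun z hz => ?_) (add_nonneg supNormOn_nonneg hε)
  calc ‖f z‖ ≤ ‖g z‖ + dist (f z) (g z) := by
        rw [dist_eq_norm]; exact norm_le_norm_add_norm_sub' _ _
    _ ≤ supNormOn s g + ε := add_le_add (norm_le_supNormOn hs hg hz) (h z hz)

lemma abs_supNormOn_sub_le [TopologicalSpace X] (hs : IsCompact s) (hf : ContinuousOn f s)
    (hg : ContinuousOn g s) {ε : ℝ} (hε : 0 ≤ ε) (h : ∀ z ∈ s, dist (f z) (g z) ≤ ε) :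
    |supNormOn s f - supNormOn s g| ≤ ε := by
  rw [abs_sub_le_iff]
  constructor
  · linarith [supNormOn_le_add hs hg hε h]
  · linarith [supNormOn_le_add hs hf hε fun z hz => (dist_comm (g z) (f z)).trans_le (h z hz)]

lemma supNormOn_eq_zero (h : ∀ z ∈ s, f z = 0) : supNormOn s f = 0 :=
  le_antisymm (supNormOn_le (fun z hz => by simp [h z hz]) le_rfl) supNormOn_nonneg

end supNormOn

lemma norm_lift_eq_supNormOn {A : Type*} [CStarAlgebra A] (a : A) [IsStarNormal a]
    (P : FreeAlgebra ℂ Bool) :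
    ‖FreeAlgebra.lift ℂ (fun b : Bool => if b then a else star a) P‖ =
      supNormOn (spectrum ℂ a) (starPolyFun P) := by
  have hP : ContinuousOn (starPolyFun P) (spectrum ℂ a) := (starPolyFun P).continuous.continuousOn
  rw [lift_eq_cfc_starPolyFun]
  exact le_antisymm
    (norm_cfc_le supNormOn_nonneg fun z hz => norm_le_supNormOn (spectrum.isCompact a) hP hz)
    (supNormOn_le (fun z hz => norm_apply_le_norm_cfc _ a hz hP) (norm_nonneg _))

lemma supNormOn_ofReal_infDist {X : Type*} [PseudoMetricSpace X] (s K : Set X) :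
    supNormOn s (fun z => (Metric.infDist z K : ℂ)) =
      sSup ((fun z => Metric.infDist z K) '' s) := by
  simp only [supNormOn, Complex.norm_real, Real.norm_of_nonneg Metric.infDist_nonneg]

section Hausdorff

variable {ι X E : Type*} {l : Filter ι} [PseudoMetricSpace X] [NormedAddCommGroup E]
  {K : Set X} {Kk : ι → Set X} {f : X → E}

lemma eventually_subset_thickening_of_tendsto_sSup_infDist (hKne : K.Nonempty)
    (hKk : ∀ k, IsCompact (Kk k))
    (h : Tendsto (fun k => sSup ((fun z => Metric.infDist z K) '' Kk k)) l (𝓝 0))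
    {δ : ℝ} (hδ : 0 < δ) : ∀ᶠ k in l, Kk k ⊆ Metric.thickening δ K := by
  filter_upwards [h.eventually_lt_const hδ] with k hk z hz
  rw [Metric.mem_thickening_iff_infDist_lt hKne]
  exact (le_csSup ((hKk k).bddAbove_image (Metric.continuous_infDist_pt K).continuousOn)
    (Set.mem_image_of_mem _ hz)).trans_lt hk

lemma eventually_supNormOn_lt (hK : IsCompact K) (hf : Continuous f)
    (hup : ∀ δ > 0, ∀ᶠ k in l, Kk k ⊆ Metric.thickening δ K) {a : ℝ}
    (ha : supNormOn K f < a) : ∀ᶠ k in l, supNormOn (Kk k) f < a := by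
  obtain ⟨b, hKb, hba⟩ := exists_between ha
  obtain ⟨δ, hδ, hthick⟩ := hK.exists_thickening_subset_open (isOpen_lt hf.norm continuous_const)
    fun z hz => (norm_le_supNormOn hK hf.continuousOn hz).trans_lt hKb
  filter_upwards [hup δ hδ] with k hk
  exact (supNormOn_le (fun z hz => (hthick (hk hz)).le) (supNormOn_nonneg.trans hKb.le)).trans_lt
    hba

lemma eventually_lt_supNormOn (hKne : K.Nonempty) (hKk : ∀ k, IsCompact (Kk k))
    (hf : Continuous f) (hlow : ∀ y ∈ K, ∀ r > 0, ∀ᶠ k in l, (Kk k ∩ Metric.ball y r).Nonempty)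
    {a : ℝ} (ha : a < supNormOn K f) : ∀ᶠ k in l, a < supNormOn (Kk k) f := by
  obtain ⟨_, ⟨y, hy, rfl⟩, hay⟩ := exists_lt_of_lt_csSup (hKne.image _) ha
  obtain ⟨r, hr, hball⟩ := Metric.isOpen_iff.1 (isOpen_lt continuous_const hf.norm) y hay
  filter_upwards [hlow y hy r hr] with k ⟨z, hzk, hzy⟩
  exact (hball hzy).trans_le (norm_le_supNormOn (hKk k) hf.continuousOn hzk)

lemma tendsto_supNormOn_of_hausdorff (hK : IsCompact K) (hKne : K.Nonempty)
    (hKk : ∀ k, IsCompact (Kk k)) (hf : Continuous f)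
    (hup : ∀ δ > 0, ∀ᶠ k in l, Kk k ⊆ Metric.thickening δ K)
    (hlow : ∀ y ∈ K, ∀ r > 0, ∀ᶠ k in l, (Kk k ∩ Metric.ball y r).Nonempty) :
    Tendsto (fun k => supNormOn (Kk k) f) l (𝓝 (supNormOn K f)) :=
  tendsto_order.2 ⟨fun _ ha => eventually_lt_supNormOn hKne hKk hf hlow ha,
    fun _ ha => eventually_supNormOn_lt hK hf hup ha⟩

end Hausdorff

section StarPolynomials

variable {ι : Type*} {l : Filter ι} {K : Set ℂ} {Kk : ι → Set ℂ}

lemma eventually_subset_closedBall_of_tendsto_supNormOn_id (hKk : ∀ k, IsCompact (Kk k))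
    {L : ℝ} (h : Tendsto (fun k => supNormOn (Kk k) (id : ℂ → ℂ)) l (𝓝 L)) :
    ∀ᶠ k in l, Kk k ⊆ Metric.closedBall 0 (L + 1) := by
  filter_upwards [h.eventually_lt_const (lt_add_one L)] with k hk z hz
  exact mem_closedBall_zero_iff.2 ((norm_le_supNormOn (hKk k) continuousOn_id hz).trans hk.le)

lemma tendsto_supNormOn_of_forall_starPolyFun {D : Set ℂ} (hD : IsCompact D) (hK : IsCompact K)
    (hKD : K ⊆ D) (hKk : ∀ k, IsCompact (Kk k)) (hKkD : ∀ᶠ k in l, Kk k ⊆ D)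
    (h : ∀ P, Tendsto (fun k => supNormOn (Kk k) (starPolyFun P)) l
      (𝓝 (supNormOn K (starPolyFun P))))
    {f : ℂ → ℂ} (hf : ContinuousOn f D) :
    Tendsto (fun k => supNormOn (Kk k) f) l (𝓝 (supNormOn K f)) := by
  refine Metric.tendsto_nhds.2 fun ε hε => ?_
  obtain ⟨P, hP⟩ := exists_starPolyFun_dist_lt hD hf (by positivity : 0 < ε / 3)
  have hclose {s : Set ℂ} (hs : IsCompact s) (hsD : s ⊆ D) :
      |supNormOn s f - supNormOn s (starPolyFun P)| ≤ ε / 3 :=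
    abs_supNormOn_sub_le hs (hf.mono hsD) (starPolyFun P).continuous.continuousOn
      (by positivity) fun z hz => (hP z (hsD hz)).le
  filter_upwards [hKkD, Metric.tendsto_nhds.1 (h P) (ε / 3) (by positivity)] with k hk hkP
  have hk' := hclose (hKk k) hk
  have hK' := hclose hK hKD
  rw [Real.dist_eq] at hkP ⊢
  rw [abs_le] at hk' hK'
  rw [abs_lt] at hkP ⊢
  constructor <;> linarith

lemma tendsto_sSup_infDist_of_forall_starPolyFun (hK : IsCompact K) (hKk : ∀ k, IsCompact (Kk k))
    (h : ∀ P, Tendsto (fun k => supNormOn (Kk k) (starPolyFun P)) l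
      (𝓝 (supNormOn K (starPolyFun P)))) :
    Tendsto (fun k => sSup ((fun z => Metric.infDist z K) '' Kk k)) l (𝓝 0) := by
  set L := supNormOn K (id : ℂ → ℂ)
  have hKball : K ⊆ Metric.closedBall 0 (L + 1) := fun z hz => mem_closedBall_zero_iff.2
    ((norm_le_supNormOn hK continuousOn_id hz).trans (le_add_of_nonneg_right zero_le_one))
  have hKkball := eventually_subset_closedBall_of_tendsto_supNormOn_id hKk
    (by simpa [starPolyFun] using h (FreeAlgebra.ι ℂ true))
  have := tendsto_supNormOn_of_forall_starPolyFun (isCompact_closedBall 0 (L + 1)) hK hKball hKk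
    hKkball h (f := fun z => (Metric.infDist z K : ℂ)) (by fun_prop)
  rwa [supNormOn_eq_zero fun z hz => by simp [Metric.infDist_zero_of_mem hz],
    funext fun k => supNormOn_ofReal_infDist (Kk k) K] at this

end StarPolynomials

section Measures

lemma ae_mem_of_forall_measure_ball_pos {X : Type*} [PseudoMetricSpace X]
    [SecondCountableTopology X] [MeasurableSpace X] {ν : Measure X} {K : Set X}
    (h : ∀ z, (∀ r > 0, 0 < ν (Metric.ball z r)) → z ∈ K) : ∀ᵐ z ∂ν, z ∈ K := by
  refine measure_null_of_locally_null _ fun z hz => ?_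
  obtain ⟨r, hr, hνr⟩ : ∃ r > 0, ν (Metric.ball z r) = 0 := by
    by_contra! hpos
    exact hz (h z fun r hr => pos_iff_ne_zero.2 (hpos r hr))
  exact ⟨_, mem_nhdsWithin_of_mem_nhds (Metric.ball_mem_nhds z hr), hνr⟩

lemma nonempty_inter_of_ae_mem_of_measure_pos {X : Type*} [MeasurableSpace X] {ν : Measure X}
    {K G : Set X} (hK : ∀ᵐ z ∂ν, z ∈ K) (hG : 0 < ν G) : (K ∩ G).Nonempty := by
  rw [Set.inter_comm]
  exact nonempty_of_measure_ne_zero ((measure_inter_conull (mem_ae_iff.1 hK)).trans_ne hG.ne')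

variable {X E : Type*} [TopologicalSpace X] [T2Space X] [MeasurableSpace X] [OpensMeasurableSpace X]
  [NormedAddCommGroup E] {ν : Measure X} {D : Set X} {f g : X → E}

lemma integrable_of_ae_mem_of_continuousOn [IsFiniteMeasure ν] (hD : IsCompact D)
    (hν : ∀ᵐ z ∂ν, z ∈ D) (hf : ContinuousOn f D) : Integrable f ν := by
  rw [← Measure.restrict_eq_self_of_ae_mem hν]
  exact hf.integrableOn_compact hD

lemma dist_integral_le_of_ae_mem [NormedSpace ℝ E] [IsProbabilityMeasure ν] (hD : IsCompact D)
    (hν : ∀ᵐ z ∂ν, z ∈ D) (hf : ContinuousOn f D) (hg : ContinuousOn g D) {ε : ℝ}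
    (h : ∀ z ∈ D, dist (f z) (g z) ≤ ε) : dist (∫ z, f z ∂ν) (∫ z, g z ∂ν) ≤ ε := by
  rw [dist_eq_norm, ← integral_sub (integrable_of_ae_mem_of_continuousOn hD hν hf)
    (integrable_of_ae_mem_of_continuousOn hD hν hg)]
  simpa using norm_integral_le_of_norm_le_const
    (hν.mono fun z hz => (dist_eq_norm (f z) (g z)).symm.trans_le (h z hz))

end Measures

lemma eventually_measure_pos_of_tendsto_integral {Ω ι 𝕜 : Type*} [RCLike 𝕜] {l : Filter ι}
    [MeasurableSpace Ω] [TopologicalSpace Ω] [OpensMeasurableSpace Ω] [HasOuterApproxClosed Ω]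
    {μ : Measure Ω} {μk : ι → Measure Ω} [IsProbabilityMeasure μ]
    [∀ k, IsProbabilityMeasure (μk k)]
    (h : ∀ f : Ω →ᵇ 𝕜, Tendsto (fun k => ∫ x, f x ∂μk k) l (𝓝 (∫ x, f x ∂μ)))
    {G : Set Ω} (hG : IsOpen G) (hpos : 0 < μ G) : ∀ᶠ k in l, 0 < μk k G :=
  eventually_lt_of_lt_liminf <| hpos.trans_le <|
    ProbabilityMeasure.le_liminf_measure_open_of_tendsto (μ := ⟨μ, inferInstance⟩)
      (μs := fun k => ⟨μk k, inferInstance⟩)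
      ((ProbabilityMeasure.tendsto_iff_forall_integral_rclike_tendsto 𝕜).2 h) hG

section Moments

variable {ι : Type*} {l : Filter ι} {μ : Measure ℂ} {μk : ι → Measure ℂ}
  [IsProbabilityMeasure μ] [∀ k, IsProbabilityMeasure (μk k)]

lemma tendsto_integral_of_forall_starPolyFun {D : Set ℂ} (hD : IsCompact D)
    (hμ : ∀ᵐ z ∂μ, z ∈ D) (hμk : ∀ᶠ k in l, ∀ᵐ z ∂μk k, z ∈ D)
    (hmom : ∀ P, Tendsto (fun k => ∫ z, starPolyFun P z ∂μk k) l
      (𝓝 (∫ z, starPolyFun P z ∂μ)))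
    {f : ℂ → ℂ} (hf : ContinuousOn f D) :
    Tendsto (fun k => ∫ z, f z ∂μk k) l (𝓝 (∫ z, f z ∂μ)) := by
  refine Metric.tendsto_nhds.2 fun ε hε => ?_
  obtain ⟨P, hP⟩ := exists_starPolyFun_dist_lt hD hf (by positivity : 0 < ε / 3)
  have hclose (ν : Measure ℂ) [IsProbabilityMeasure ν] (hν : ∀ᵐ z ∂ν, z ∈ D) :
      dist (∫ z, f z ∂ν) (∫ z, starPolyFun P z ∂ν) ≤ ε / 3 :=
    dist_integral_le_of_ae_mem hD hν hf (starPolyFun P).continuous.continuousOn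
      fun z hz => (hP z hz).le
  filter_upwards [hμk, Metric.tendsto_nhds.1 (hmom P) (ε / 3) (by positivity)] with k hk hkP
  have hk' := hclose (μk k) hk
  have hμ' := hclose μ hμ
  rw [dist_comm] at hμ'
  linarith [dist_triangle4 (∫ z, f z ∂μk k) (∫ z, starPolyFun P z ∂μk k)
    (∫ z, starPolyFun P z ∂μ) (∫ z, f z ∂μ)]

lemma tendsto_supNormOn_of_tendsto_sSup_infDist {K : Set ℂ} {Kk : ι → Set ℂ}
    (hK : IsCompact K) (hKne : K.Nonempty) (hKk : ∀ k, IsCompact (Kk k))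
    (hμ : ∀ y ∈ K, ∀ r > 0, 0 < μ (Metric.ball y r)) (hμK : ∀ᵐ z ∂μ, z ∈ K)
    (hμk : ∀ k, ∀ᵐ z ∂μk k, z ∈ Kk k)
    (hmom : ∀ P, Tendsto (fun k => ∫ z, starPolyFun P z ∂μk k) l
      (𝓝 (∫ z, starPolyFun P z ∂μ)))
    (hH : Tendsto (fun k => sSup ((fun z => Metric.infDist z K) '' Kk k)) l (𝓝 0))
    {f : ℂ → ℂ} (hf : Continuous f) :
    Tendsto (fun k => supNormOn (Kk k) f) l (𝓝 (supNormOn K f)) := by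
  have hup δ (hδ : 0 < δ) := eventually_subset_thickening_of_tendsto_sSup_infDist hKne hKk hH hδ
  have hweak (g : ℂ →ᵇ ℂ) : Tendsto (fun k => ∫ z, g z ∂μk k) l (𝓝 (∫ z, g z ∂μ)) :=
    tendsto_integral_of_forall_starPolyFun hK.cthickening
      (hμK.mono fun z hz => Metric.self_subset_cthickening K hz)
      ((hup 1 one_pos).mono fun k hk => (hμk k).mono fun z hz =>
        Metric.thickening_subset_cthickening 1 K (hk hz))
      hmom g.continuous.continuousOn
  refine tendsto_supNormOn_of_hausdorff hK hKne hKk hf hup fun y hy r hr => ?_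
  filter_upwards [eventually_measure_pos_of_tendsto_integral hweak Metric.isOpen_ball
    (hμ y hy r hr)] with k hk
  exact nonempty_inter_of_ae_mem_of_measure_pos (hμk k) hk

end Moments

theorem stmt_16_general
    (Hlim : Type*) [NormedAddCommGroup Hlim] [InnerProductSpace ℂ Hlim]
    [CompleteSpace Hlim] [Nontrivial Hlim]
    (Hk : ℕ → Type*) [∀ k, NormedAddCommGroup (Hk k)] [∀ k, InnerProductSpace ℂ (Hk k)]
    [∀ k, CompleteSpace (Hk k)]
    (T : Hlim →L[ℂ] Hlim) (Tk : ∀ k, Hk k →L[ℂ] Hk k)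
    (hT : IsStarNormal T) (hTk : ∀ k, IsStarNormal (Tk k))
    (μ : Measure ℂ) (μk : ℕ → Measure ℂ)
    [IsProbabilityMeasure μ] [∀ k, IsProbabilityMeasure (μk k)]
    (hsupp : ∀ z : ℂ, z ∈ spectrum ℂ T ↔ ∀ r : ℝ, 0 < r → 0 < μ (Metric.ball z r))
    (hksupp : ∀ k, ∀ z : ℂ,
      z ∈ spectrum ℂ (Tk k) ↔ ∀ r : ℝ, 0 < r → 0 < μk k (Metric.ball z r))
    (hmom : ∀ P : FreeAlgebra ℂ Bool,
      Tendsto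
        (fun k => ∫ z : ℂ,
          FreeAlgebra.lift ℂ (fun b : Bool => if b then z else (starRingEnd ℂ) z) P
            ∂ μk k)
        atTop
        (𝓝 (∫ z : ℂ,
          FreeAlgebra.lift ℂ (fun b : Bool => if b then z else (starRingEnd ℂ) z) P
            ∂ μ))) :
    (∀ P : FreeAlgebra ℂ Bool,
        Tendsto
          (fun k => ‖FreeAlgebra.lift ℂ
            (fun b : Bool => if b then Tk k else ContinuousLinearMap.adjoint (Tk k)) P‖)
          atTop
          (𝓝 ‖FreeAlgebra.lift ℂ
            (fun b : Bool => if b then T else ContinuousLinearMap.adjoint T) P‖)) ↔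
      Tendsto
        (fun k => sSup ((fun z : ℂ => Metric.infDist z (spectrum ℂ T)) ''
          spectrum ℂ (Tk k)))
        atTop (𝓝 0) := by
  simp only [← ContinuousLinearMap.star_eq_adjoint, norm_lift_eq_supNormOn]
  simp only [lift_apply_eq_starPolyFun] at hmom
  have hKk (k : ℕ) : IsCompact (spectrum ℂ (Tk k)) := spectrum.isCompact (Tk k)
  constructor
  · exact tendsto_sSup_infDist_of_forall_starPolyFun (spectrum.isCompact T) hKk
  · intro hH P
    exact tendsto_supNormOn_of_tendsto_sSup_infDist (spectrum.isCompact T) (spectrum.nonempty T)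
      hKk (fun y hy => (hsupp y).1 hy) (ae_mem_of_forall_measure_ball_pos fun z => (hsupp z).2)
      (fun k => ae_mem_of_forall_measure_ball_pos fun z => (hksupp k z).2) hmom hH
      (starPolyFun P).continuous

/-- let `T`, `Tₖ` be bounded normal operators with spectra `K`, `Kₖ`,
and suppose `Tₖ → T` in *-moments with respect to faithful states; equivalently, the
spectral measures `μₖ`, `μ` (probability measures with full support `Kₖ`, `K`) converge
weakly on *-polynomials.  Then `Tₖ → T` strongly — `‖P(Tₖ, Tₖ*)‖ → ‖P(T, T*)‖` for all
*-polynomials `P` — if and only if `sup_{λ ∈ Kₖ} dist(λ, K) → 0`. -/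
theorem stmt_16
    (Hlim : Type*) [NormedAddCommGroup Hlim] [InnerProductSpace ℂ Hlim]
    [CompleteSpace Hlim] [Nontrivial Hlim]
    (Hk : ℕ → Type*) [∀ k, NormedAddCommGroup (Hk k)] [∀ k, InnerProductSpace ℂ (Hk k)]
    [∀ k, CompleteSpace (Hk k)] [∀ k, Nontrivial (Hk k)]
    (T : Hlim →L[ℂ] Hlim) (Tk : ∀ k, Hk k →L[ℂ] Hk k)
    (hT : IsStarNormal T) (hTk : ∀ k, IsStarNormal (Tk k))
    (μ : Measure ℂ) (μk : ℕ → Measure ℂ)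
    [IsProbabilityMeasure μ] [∀ k, IsProbabilityMeasure (μk k)]
    (hsupp : ∀ z : ℂ, z ∈ spectrum ℂ T ↔ ∀ r : ℝ, 0 < r → 0 < μ (Metric.ball z r))
    (hksupp : ∀ k, ∀ z : ℂ,
      z ∈ spectrum ℂ (Tk k) ↔ ∀ r : ℝ, 0 < r → 0 < μk k (Metric.ball z r))
    (hmom : ∀ P : FreeAlgebra ℂ Bool,
      Tendsto
        (fun k => ∫ z : ℂ,
          FreeAlgebra.lift ℂ (fun b : Bool => if b then z else (starRingEnd ℂ) z) P
            ∂ μk k)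
        atTop
        (𝓝 (∫ z : ℂ,
          FreeAlgebra.lift ℂ (fun b : Bool => if b then z else (starRingEnd ℂ) z) P
            ∂ μ))) :
    (∀ P : FreeAlgebra ℂ Bool,
        Tendsto
          (fun k => ‖FreeAlgebra.lift ℂ
            (fun b : Bool => if b then Tk k else ContinuousLinearMap.adjoint (Tk k)) P‖)
          atTop
          (𝓝 ‖FreeAlgebra.lift ℂ
            (fun b : Bool => if b then T else ContinuousLinearMap.adjoint T) P‖)) ↔
      Tendsto
        (fun k => sSup ((fun z : ℂ => Metric.infDist z (spectrum ℂ T)) ''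
          spectrum ℂ (Tk k)))
        atTop (𝓝 0) :=
  stmt_16_general Hlim Hk T Tk hT hTk μ μk hsupp hksupp hmom
end

section
/- Let c ≥ 1, α > 0, and let (aₖ), (bₖ) be sequences of nonnegative reals such that for all k and all m ≥ 1: (c·(2m)^α)^(-1)·bₖ(m) ≤ aₖ^{2m} ≤ c·(2m)^α·bₖ(m) and (c·(2m)^α)^(-1)·B(m) ≤ A^{2m} ≤ c·(2m)^α·B(m), where A ≥ 0 and B(m), bₖ(m) ≥ 0, and suppose bₖ(m) → B(m) as k → ∞ for each fixed m. Then aₖ → A. -/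
open Filter Topology

lemma aux18 (c α r : ℝ) (hα : 0 < α) (hr : 1 < r) :
    ∀ᶠ m : ℕ in atTop, (c * ((2 * m : ℕ) : ℝ) ^ α) ^ 2 < r ^ (2 * m) := by
  have hb : 0 < Real.log r := Real.log_pos hr
  have h0 : Tendsto (fun x : ℝ => x ^ (2 * α) * Real.exp (-Real.log r * x)) atTop (𝓝 0) :=
    tendsto_rpow_mul_exp_neg_mul_atTop_nhds_zero (2 * α) _ hb
  have h1 : Tendsto (fun m : ℕ => ((2 * m : ℕ) : ℝ)) atTop atTop := by
    apply tendsto_natCast_atTop_atTop.comp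
    exact tendsto_atTop_atTop_of_monotone (fun x y h => by omega) (fun n => ⟨n, by omega⟩)
  have h2 : Tendsto (fun m : ℕ => c ^ 2 * (((2 * m : ℕ) : ℝ) ^ (2 * α) *
      Real.exp (-Real.log r * ((2 * m : ℕ) : ℝ)))) atTop (𝓝 (c ^ 2 * 0)) :=
    (h0.comp h1).const_mul _
  rw [mul_zero] at h2
  filter_upwards [h2.eventually (eventually_lt_nhds zero_lt_one), h1.eventually_ge_atTop 1]
    with m hm hm1
  have hx : (0:ℝ) < ((2 * m : ℕ) : ℝ) := by linarith
  have hrp : r ^ (2 * m) = Real.exp (Real.log r * ((2 * m : ℕ) : ℝ)) := by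
    rw [mul_comm (Real.log r), Real.exp_nat_mul, Real.exp_log (by linarith)]
  have hx2 : ((2 * m : ℕ) : ℝ) ^ (2 * α) = (((2 * m : ℕ) : ℝ) ^ α) ^ 2 := by
    rw [mul_comm 2 α, Real.rpow_mul hx.le, Real.rpow_two]
  have hexp : 0 < Real.exp (Real.log r * ((2 * m : ℕ) : ℝ)) := Real.exp_pos _
  rw [hrp, mul_pow]
  rw [neg_mul, Real.exp_neg, hx2, ← mul_assoc, ← div_eq_mul_inv, div_lt_one hexp] at hm
  exact hm

/-- if `aₖ^{2m}` and `A^{2m}` are squeezed, with two-sided constant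
`c·(2m)^α`, between `bₖ(m)` resp. `B(m)` for all `m ≥ 1`, and `bₖ(m) → B(m)` as
`k → ∞` for each fixed `m`, then `aₖ → A`. -/
theorem stmt_18 (c α : ℝ) (hc : 1 ≤ c) (hα : 0 < α)
    (a : ℕ → ℝ) (A : ℝ) (b : ℕ → ℕ → ℝ) (B : ℕ → ℝ)
    (ha : ∀ k, 0 ≤ a k) (hA : 0 ≤ A)
    (hb : ∀ k m, 0 ≤ b k m) (hB : ∀ m, 0 ≤ B m)
    (h1 : ∀ k m, 1 ≤ m →
      (c * ((2 * m : ℕ) : ℝ) ^ α)⁻¹ * b k m ≤ a k ^ (2 * m) ∧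
      a k ^ (2 * m) ≤ c * ((2 * m : ℕ) : ℝ) ^ α * b k m)
    (h2 : ∀ m : ℕ, 1 ≤ m →
      (c * ((2 * m : ℕ) : ℝ) ^ α)⁻¹ * B m ≤ A ^ (2 * m) ∧
      A ^ (2 * m) ≤ c * ((2 * m : ℕ) : ℝ) ^ α * B m)
    (h3 : ∀ m : ℕ, 1 ≤ m → Tendsto (fun k => b k m) atTop (𝓝 (B m))) :
    Tendsto a atTop (𝓝 A) := by
  have hc0 : (0:ℝ) < c := lt_of_lt_of_le one_pos hc
  rcases eq_or_lt_of_le hA with hA0 | hApos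
  · -- A = 0
    have hA0' : A = 0 := hA0.symm
    subst hA0'
    have hDpos : (0:ℝ) < c * ((2 * 1 : ℕ) : ℝ) ^ α := by positivity
    have hB1 : B 1 = 0 := by
      have h := (h2 1 le_rfl).1
      have h0 : (0:ℝ) ^ (2 * 1) = 0 := by norm_num
      rw [h0] at h
      nlinarith [inv_pos.mpr hDpos, hB 1]
    have hub := h3 1 le_rfl
    rw [hB1] at hub
    have hlim : Tendsto (fun k => c * ((2 * 1 : ℕ) : ℝ) ^ α * b k 1) atTop
        (𝓝 (c * ((2 * 1 : ℕ) : ℝ) ^ α * 0)) := hub.const_mul _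
    rw [mul_zero] at hlim
    have hsq : Tendsto (fun k => a k ^ (2 * 1)) atTop (𝓝 0) :=
      squeeze_zero (fun k => pow_nonneg (ha k) _) (fun k => (h1 k 1 le_rfl).2) hlim
    have hsqrt : Tendsto (fun k => Real.sqrt (a k ^ (2 * 1))) atTop (𝓝 (Real.sqrt 0)) :=
      (Real.continuous_sqrt.tendsto 0).comp hsq
    rw [Real.sqrt_zero] at hsqrt
    exact hsqrt.congr fun k => by
      rw [show 2 * 1 = 2 from rfl, Real.sqrt_sq (ha k)]
  · -- A > 0
    rw [Metric.tendsto_atTop]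
    intro ε hε
    set ε' := min ε (A / 2) with hε'def
    have hε'pos : 0 < ε' := lt_min hε (by linarith)
    have hε'A : ε' < A := lt_of_le_of_lt (min_le_right _ _) (by linarith)
    have hεε : ε' ≤ ε := min_le_left _ _
    have hr1 : 1 < (A + ε') / A := by rw [lt_div_iff₀ hApos]; linarith
    have hr2 : 1 < A / (A - ε') := by rw [lt_div_iff₀ (by linarith)]; linarith
    obtain ⟨m, hm1, hup, hlo⟩ : ∃ m, 1 ≤ m ∧
        (c * ((2 * m : ℕ) : ℝ) ^ α) ^ 2 < ((A + ε') / A) ^ (2 * m) ∧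
        (c * ((2 * m : ℕ) : ℝ) ^ α) ^ 2 < (A / (A - ε')) ^ (2 * m) := by
      obtain ⟨m, h⟩ := ((aux18 c α _ hα hr1).and ((aux18 c α _ hα hr2).and
        (eventually_ge_atTop 1))).exists
      exact ⟨m, h.2.2, h.1, h.2.1⟩
    set D := c * ((2 * m : ℕ) : ℝ) ^ α with hDdef
    have hx : (0:ℝ) < ((2 * m : ℕ) : ℝ) := by
      have : (1:ℕ) ≤ 2 * m := by omega
      exact_mod_cast lt_of_lt_of_le zero_lt_one (by exact_mod_cast this)
    have hDpos : 0 < D := by positivity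
    have hBub : B m ≤ D * A ^ (2 * m) := by
      have h := (h2 m hm1).1
      rw [inv_mul_le_iff₀ hDpos] at h
      exact h
    have hAub : A ^ (2 * m) ≤ D * B m := (h2 m hm1).2
    have hApow : (0:ℝ) < A ^ (2 * m) := pow_pos hApos _
    have hup' : D * B m < (A + ε') ^ (2 * m) := by
      have e : ((A + ε') / A) ^ (2 * m) * A ^ (2 * m) = (A + ε') ^ (2 * m) := by
        rw [← mul_pow, div_mul_cancel₀ _ hApos.ne']
      nlinarith [mul_lt_mul_of_pos_right hup hApow]
    have hlow' : (A - ε') ^ (2 * m) < D⁻¹ * B m := by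
      have hAe : (0:ℝ) < (A - ε') ^ (2 * m) := pow_pos (by linarith) _
      have e : (A / (A - ε')) ^ (2 * m) * (A - ε') ^ (2 * m) = A ^ (2 * m) := by
        rw [← mul_pow, div_mul_cancel₀ _ (by linarith : A - ε' ≠ 0)]
      -- D^2 * (A-ε')^(2m) < A^(2m) ≤ D * B m, so D * (A-ε')^(2m) < B m
      have h1' : D ^ 2 * (A - ε') ^ (2 * m) < A ^ (2 * m) := by
        nlinarith [mul_lt_mul_of_pos_right hlo hAe]
      rw [lt_inv_mul_iff₀ hDpos]
      nlinarith
    have hev1 : ∀ᶠ k in atTop, D * b k m < (A + ε') ^ (2 * m) :=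
      (((h3 m hm1).const_mul D).eventually (eventually_lt_nhds hup'))
    have hev2 : ∀ᶠ k in atTop, (A - ε') ^ (2 * m) < D⁻¹ * b k m :=
      (((h3 m hm1).const_mul D⁻¹).eventually (eventually_gt_nhds hlow'))
    obtain ⟨N, hN⟩ := eventually_atTop.mp (hev1.and hev2)
    refine ⟨N, fun k hk => ?_⟩
    obtain ⟨hk1, hk2⟩ := hN k hk
    have hup'' : a k < A + ε' := by
      apply lt_of_pow_lt_pow_left₀ (2 * m) (by linarith)
      calc a k ^ (2 * m) ≤ D * b k m := (h1 k m hm1).2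
        _ < (A + ε') ^ (2 * m) := hk1
    have hlow'' : A - ε' < a k := by
      apply lt_of_pow_lt_pow_left₀ (2 * m) (ha k)
      calc (A - ε') ^ (2 * m) < D⁻¹ * b k m := hk2
        _ ≤ a k ^ (2 * m) := (h1 k m hm1).1
    rw [Real.dist_eq, abs_lt]
    constructor <;> linarith
end
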